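/- Let 𝒜 be a nonempty finite alphabet and let ω be a Toeplitz sequence over 𝒜. Then the subshift σ|_{Z(ω,σ)} is minimal: for every x ∈ Z(ω,σ), the closure of the orbit {σ^n x : n ≥ 0} equals Z(ω,σ). -/

import Mathlib

/-!
Every prefix of length `N` of a Toeplitz sequence `ω` recurs at all multiples of a common
period `P` of its positions. A point `x` of `Z(ω,σ)` agrees on `[0, N + P)` with some shift
`σ^j ω`, and within the first `P` positions of that window sits a multiple of `P`; hence some
shift of `x` agrees with `ω` on `[0, N)`. So `ω ∈ Z(x,σ)`, and the two orbit closures coincide.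
-/

/-- The one-sided shift on sequences.  Sequences are 0-indexed here: index `n`
stands for position `n+1` of the paper's sequences `{1,2,3,…} → 𝒜`. -/
def shift {𝒜 : Type*} (x : ℕ → 𝒜) : ℕ → 𝒜 := fun n => x (n + 1)

/-- `Z(ω,σ)`: the closure of the forward shift-orbit of `ω`. -/
def orbitClosure {𝒜 : Type*} [TopologicalSpace 𝒜] (ω : ℕ → 𝒜) : Set (ℕ → 𝒜) :=
  closure {y | ∃ n : ℕ, shift^[n] ω = y}

/-- A sequence is Toeplitz if every position is periodically repeated. -/
def IsToeplitz {𝒜 : Type*} (x : ℕ → 𝒜) : Prop :=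
  ∀ n : ℕ, ∃ p : ℕ, 0 < p ∧ ∀ k : ℕ, 0 < k → x (n + k * p) = x n

open Set PiNat

section Shift

variable {𝒜 : Type*}

lemma shift_iterate_apply (x : ℕ → 𝒜) (n m : ℕ) : shift^[n] x m = x (m + n) := by
  induction n generalizing x with
  | zero => rfl
  | succ n ih => rw [Function.iterate_succ_apply, ih]; rfl

variable [TopologicalSpace 𝒜]

lemma continuous_shift_iterate (n : ℕ) : Continuous (shift^[n] : (ℕ → 𝒜) → ℕ → 𝒜) := by
  have : (shift^[n] : (ℕ → 𝒜) → ℕ → 𝒜) = fun x m => x (m + n) :=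
    funext fun x => funext fun m => shift_iterate_apply x n m
  rw [this]
  fun_prop

lemma mapsTo_shift_iterate_orbitClosure (ω : ℕ → 𝒜) (n : ℕ) :
    MapsTo shift^[n] (orbitClosure ω) (orbitClosure ω) := by
  refine MapsTo.closure ?_ (continuous_shift_iterate n)
  rintro _ ⟨k, rfl⟩
  exact ⟨n + k, Function.iterate_add_apply shift n k ω⟩

lemma orbitClosure_subset_of_mem {ω x : ℕ → 𝒜} (hx : x ∈ orbitClosure ω) :
    orbitClosure x ⊆ orbitClosure ω :=
  closure_minimal (by rintro _ ⟨n, rfl⟩; exact mapsTo_shift_iterate_orbitClosure ω n hx)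
    isClosed_closure

lemma mem_closure_iff_forall_cylinder [DiscreteTopology 𝒜] {S : Set (ℕ → 𝒜)} {x : ℕ → 𝒜} :
    x ∈ closure S ↔ ∀ n, (cylinder x n ∩ S).Nonempty := by
  rw [(isTopologicalBasis_cylinders fun _ => 𝒜).mem_closure_iff]
  constructor
  · exact fun h n => h _ ⟨x, n, rfl⟩ (self_mem_cylinder x n)
  · rintro h _ ⟨y, n, rfl⟩ hx
    rw [← mem_cylinder_iff_eq.1 hx]
    exact h n

lemma mem_orbitClosure_iff [DiscreteTopology 𝒜] {ω x : ℕ → 𝒜} :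
    x ∈ orbitClosure ω ↔ ∀ N, ∃ j, ∀ m < N, ω (m + j) = x m := by
  simp only [orbitClosure, mem_closure_iff_forall_cylinder, Set.Nonempty, mem_inter_iff,
    mem_cylinder_iff]
  refine forall_congr' fun N => ⟨?_, fun ⟨j, hj⟩ => ⟨_, fun m hm => ?_, j, rfl⟩⟩
  · rintro ⟨_, hy, j, rfl⟩
    exact ⟨j, fun m hm => (shift_iterate_apply ω j m).symm.trans (hy m hm)⟩
  · exact (shift_iterate_apply ω j m).trans (hj m hm)

end Shift

namespace IsToeplitz

variable {𝒜 : Type*} {ω : ℕ → 𝒜}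

lemma exists_common_period (hT : IsToeplitz ω) (N : ℕ) :
    ∃ P, 0 < P ∧ ∀ n < N, ∀ k, ω (n + k * P) = ω n := by
  choose p hp hper using hT
  refine ⟨∏ n ∈ Finset.range N, p n, Finset.prod_pos fun n _ => hp n, fun n hn k => ?_⟩
  obtain ⟨c, hc⟩ := Finset.dvd_prod_of_mem p (Finset.mem_range.2 hn)
  rcases Nat.eq_zero_or_pos (k * c) with hkc | hkc
  · rcases Nat.mul_eq_zero.1 hkc with rfl | rfl <;> simp [hc]
  · rw [hc, ← Nat.mul_assoc, Nat.mul_right_comm]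
    exact hper n _ hkc

lemma mem_orbitClosure_of_mem_orbitClosure [TopologicalSpace 𝒜] [DiscreteTopology 𝒜]
    (hT : IsToeplitz ω) {x : ℕ → 𝒜} (hx : x ∈ orbitClosure ω) : ω ∈ orbitClosure x := by
  rw [mem_orbitClosure_iff] at hx ⊢
  intro N
  obtain ⟨P, hP, hper⟩ := hT.exists_common_period N
  obtain ⟨j, hj⟩ := hx (N + P)
  have hr : j % P < P := Nat.mod_lt j hP
  have hj' : j / P * P + j % P = j := Nat.div_add_mod' j P
  refine ⟨P - j % P, fun m hm => ?_⟩
  calc x (m + (P - j % P)) = ω (m + (P - j % P) + j) := (hj _ (by omega)).symm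
    _ = ω (m + (j / P + 1) * P) := by rw [Nat.succ_mul]; congr 1; omega
    _ = ω m := hper m hm _

end IsToeplitz

theorem stmt10_general {𝒜 : Type*} [TopologicalSpace 𝒜] [DiscreteTopology 𝒜]
    (ω : ℕ → 𝒜) (hT : IsToeplitz ω) :
    ∀ x ∈ orbitClosure ω, orbitClosure x = orbitClosure ω := fun _ hx =>
  (orbitClosure_subset_of_mem hx).antisymm
    (orbitClosure_subset_of_mem (hT.mem_orbitClosure_of_mem_orbitClosure hx))

/-- For a Toeplitz sequence `ω`, the subshift `σ|_{Z(ω,σ)}` is minimal: the orbit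
closure of every point of `Z(ω,σ)` is all of `Z(ω,σ)`. -/
theorem stmt10 {𝒜 : Type*} [Fintype 𝒜] [Nonempty 𝒜] [TopologicalSpace 𝒜] [DiscreteTopology 𝒜]
    (ω : ℕ → 𝒜) (hT : IsToeplitz ω) :
    ∀ x ∈ orbitClosure ω, orbitClosure x = orbitClosure ω :=
  stmt10_general ω hT
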